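/- Fix μ_max > 0. There is a constant C > 0 such that for every μ ∈ (0, μ_max] and every ξ ∈ ℝ, the symbol F_μ(ξ) = sqrt(tanh(√μ |ξ|)/(√μ |ξ|)) satisfies |F_μ(ξ) − 1| ≤ C μ ξ² and |F_μ'(ξ)| ≤ C μ |ξ|. -/

import Mathlib

open Real

/-- The symbol `F_μ(ξ) = sqrt(tanh(√μ|ξ|)/(√μ|ξ|))`. -/
noncomputable def Fsymb (μ : ℝ) (ξ : ℝ) : ℝ :=
  if μ = 0 ∨ ξ = 0 then 1 else Real.sqrt (Real.tanh (Real.sqrt μ * |ξ|) / (Real.sqrt μ * |ξ|))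

/-!
Since `F_μ(ξ) = G(√μ ξ)` with `G = F_1`, both bounds follow by scaling from
`|G x - 1| ≤ x² / 3` and `|G' x| ≤ |x| / 2`, so `C = 1/2` works for every `μ > 0`.
Write `g = tanh x / x ∈ (0, 1]` for `x > 0`. Integrating `tanh' = 1 - tanh² ≥ 1 - x²` gives
`x - tanh x ≤ x³ / 3`, hence `1 - √g ≤ 1 - g ≤ x² / 3`. For the derivative,
`G' = g' / (2√g)` with `x² g' = x sech² x - tanh x ∈ [-x tanh² x, 0]` (because
`x ≤ sinh x cosh x` and `tanh x ≤ x`), and `tanh x = x g` turns this into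
`|G'| ≤ x g^{3/2} / 2`.
`G` is even, and `G'(0) = 0` by the quadratic bound at the origin.
-/

namespace Real

theorem one_div_cosh_sq (x : ℝ) : 1 / cosh x ^ 2 = 1 - tanh x ^ 2 := by
  have := cosh_sq x
  have := (cosh_pos x).ne'
  rw [tanh_eq_sinh_div_cosh]
  field_simp
  linarith

theorem hasDerivAt_tanh (x : ℝ) : HasDerivAt tanh (1 / cosh x ^ 2) x := by
  have h := (hasDerivAt_sinh x).div (hasDerivAt_cosh x) (cosh_pos x).ne'
  rw [show sinh / cosh = tanh from funext fun y => (tanh_eq_sinh_div_cosh y).symm] at h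
  exact h.congr_deriv (by rw [← cosh_sq_sub_sinh_sq x]; ring)

theorem tanh_nonneg {x : ℝ} (hx : 0 ≤ x) : 0 ≤ tanh x := by
  rw [tanh_eq_sinh_div_cosh]
  exact div_nonneg (sinh_nonneg_iff.2 hx) (cosh_pos x).le

theorem monotone_self_sub_tanh : Monotone fun x => x - tanh x :=
  monotone_of_hasDerivAt_nonneg (fun x => (hasDerivAt_id x).sub (hasDerivAt_tanh x))
    fun x => by simp only [one_div_cosh_sq, Pi.zero_apply]; linarith [sq_nonneg (tanh x)]

theorem tanh_le_self {x : ℝ} (hx : 0 ≤ x) : tanh x ≤ x := by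
  simpa using monotone_self_sub_tanh hx

theorem self_div_cosh_sq_le_tanh {x : ℝ} (hx : 0 ≤ x) : x / cosh x ^ 2 ≤ tanh x := by
  have hc := cosh_pos x
  rw [tanh_eq_sinh_div_cosh, sq, ← div_div, div_le_div_iff_of_pos_right hc, div_le_iff₀ hc]
  calc x ≤ sinh x := self_le_sinh_iff.2 hx
    _ ≤ sinh x * cosh x := le_mul_of_one_le_right (sinh_nonneg_iff.2 hx) (one_le_cosh x)

theorem self_sub_tanh_le {x : ℝ} (hx : 0 ≤ x) : x - tanh x ≤ x ^ 3 / 3 := by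
  have hmono : MonotoneOn (fun y => y ^ 3 / 3 - y + tanh y) (Set.Ici 0) := by
    have hderiv (y : ℝ) : HasDerivAt (fun y => y ^ 3 / 3 - y + tanh y) (y ^ 2 - tanh y ^ 2) y :=
      ((((hasDerivAt_pow 3 y).div_const 3).sub (hasDerivAt_id y)).add
        (hasDerivAt_tanh y)).congr_deriv (by rw [one_div_cosh_sq]; push_cast; ring)
    refine monotoneOn_of_hasDerivWithinAt_nonneg (convex_Ici 0)
      (fun y _ => (hderiv y).continuousAt.continuousWithinAt)
      (fun y _ => (hderiv y).hasDerivWithinAt) fun y hy => ?_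
    rw [interior_Ici, Set.mem_Ioi] at hy
    have := tanh_le_self hy.le
    have := tanh_nonneg hy.le
    nlinarith
  have := hmono Set.self_mem_Ici hx hx
  simp only [tanh_zero] at this
  linarith

end Real

theorem hasDerivAt_zero_of_abs_sub_le_sq {f : ℝ → ℝ} {a C : ℝ}
    (h : ∀ x, |f x - f a| ≤ C * (x - a) ^ 2) : HasDerivAt f 0 a := by
  rw [hasDerivAt_iff_isLittleO]
  simp only [smul_zero, sub_zero]
  refine (Asymptotics.IsBigO.of_bound C (Filter.Eventually.of_forall fun x => ?_)).trans_isLittleO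
    (Asymptotics.isLittleO_pow_sub_sub a one_lt_two)
  simpa using h x

theorem tanh_div_self_mem_Ioc {x : ℝ} (hx : 0 < x) : tanh x / x ∈ Set.Ioc 0 1 := by
  have htanh : 0 < tanh x := by
    rw [tanh_eq_sinh_div_cosh]; exact div_pos (sinh_pos_iff.2 hx) (cosh_pos x)
  exact ⟨div_pos htanh hx, (div_le_one hx).2 (tanh_le_self hx.le)⟩

theorem Fsymb_one_of_ne_zero {x : ℝ} (hx : x ≠ 0) : Fsymb 1 x = √(tanh |x| / |x|) := by
  simp [Fsymb, hx]

theorem Fsymb_eq_Fsymb_one_comp_mul {μ : ℝ} (hμ : 0 ≤ μ) :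
    Fsymb μ = fun ξ => Fsymb 1 (√μ * ξ) := by
  funext ξ
  rcases hμ.eq_or_lt with rfl | hμ
  · simp [Fsymb]
  rcases eq_or_ne ξ 0 with rfl | hξ
  · simp [Fsymb]
  rw [Fsymb_one_of_ne_zero (mul_ne_zero (sqrt_pos.2 hμ).ne' hξ), abs_mul,
    abs_of_pos (sqrt_pos.2 hμ), Fsymb, if_neg (by simp [hμ.ne', hξ])]

theorem Fsymb_one_neg (x : ℝ) : Fsymb 1 (-x) = Fsymb 1 x := by
  simp [Fsymb]

theorem abs_Fsymb_one_sub_one_le (x : ℝ) : |Fsymb 1 x - 1| ≤ x ^ 2 / 3 := by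
  rcases eq_or_ne x 0 with rfl | hx
  · simp [Fsymb]
  have hpos : 0 < |x| := abs_pos.2 hx
  obtain ⟨hg0, hg1⟩ := tanh_div_self_mem_Ioc hpos
  have hgap : 1 - tanh |x| / |x| ≤ x ^ 2 / 3 := by
    rw [← sq_abs x, one_sub_div hpos.ne', div_le_iff₀ hpos]
    linarith [self_sub_tanh_le hpos.le]
  rw [Fsymb_one_of_ne_zero hx, abs_sub_comm, abs_of_nonneg (by simpa using sqrt_le_one.2 hg1)]
  calc 1 - √(tanh |x| / |x|) ≤ 1 - tanh |x| / |x| := by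
        gcongr; exact le_sqrt_of_sq_le (by nlinarith)
    _ ≤ x ^ 2 / 3 := hgap

theorem hasDerivAt_Fsymb_one {x : ℝ} (hx : 0 < x) :
    HasDerivAt (Fsymb 1)
      ((x / cosh x ^ 2 - tanh x) / x ^ 2 / (2 * √(tanh x / x))) x := by
  have hg := ((hasDerivAt_tanh x).div (hasDerivAt_id x) hx.ne').sqrt
    (tanh_div_self_mem_Ioc hx).1.ne'
  refine (hg.congr_deriv (by simp only [id, Pi.div_apply]; ring)).congr_of_eventuallyEq ?_
  filter_upwards [Ioi_mem_nhds hx] with y hy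
  rw [Fsymb_one_of_ne_zero (ne_of_gt hy), abs_of_pos hy]
  rfl

theorem abs_deriv_Fsymb_one_le_of_pos {x : ℝ} (hx : 0 < x) : |deriv (Fsymb 1) x| ≤ x / 2 := by
  rw [(hasDerivAt_Fsymb_one hx).deriv]
  set s := √(tanh x / x)
  have hs : 0 < s := sqrt_pos.2 (tanh_div_self_mem_Ioc hx).1
  have hs1 : s ≤ 1 := sqrt_le_one.2 (tanh_div_self_mem_Ioc hx).2
  have ht : tanh x = x * s ^ 2 := by
    rw [sq_sqrt (tanh_div_self_mem_Ioc hx).1.le]; field_simp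
  have hnum : |x / cosh x ^ 2 - tanh x| ≤ x * tanh x ^ 2 := by
    have hsech : x / cosh x ^ 2 = x * (1 - tanh x ^ 2) := by rw [← one_div_cosh_sq]; ring
    rw [abs_le]
    constructor <;> nlinarith [tanh_le_self hx.le, self_div_cosh_sq_le_tanh hx.le]
  rw [abs_div, abs_div, abs_of_pos (by positivity : (0:ℝ) < x ^ 2),
    abs_of_pos (by positivity : (0:ℝ) < 2 * s), div_div, div_le_iff₀ (by positivity)]
  calc _ ≤ x * tanh x ^ 2 := hnum
    _ = x ^ 3 * s ^ 4 := by rw [ht]; ring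
    _ ≤ x ^ 3 * s := by gcongr; exact pow_le_of_le_one hs.le hs1 (by norm_num)
    _ = x / 2 * (x ^ 2 * (2 * s)) := by ring

theorem abs_deriv_Fsymb_one_le (x : ℝ) : |deriv (Fsymb 1) x| ≤ |x| / 2 := by
  rcases lt_trichotomy x 0 with hx | rfl | hx
  · have heven : Fsymb 1 = fun y => Fsymb 1 (-y) := funext fun y => (Fsymb_one_neg y).symm
    rw [heven, deriv_comp_neg, abs_neg, abs_of_neg hx]
    exact abs_deriv_Fsymb_one_le_of_pos (neg_pos.2 hx)
  · have h0 : HasDerivAt (Fsymb 1) 0 0 :=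
      hasDerivAt_zero_of_abs_sub_le_sq (C := 1 / 3) fun x => by
        rw [show Fsymb 1 0 = 1 by simp [Fsymb], sub_zero]
        linarith [abs_Fsymb_one_sub_one_le x]
    simp [h0.deriv]
  · rw [abs_of_pos hx]
    exact abs_deriv_Fsymb_one_le_of_pos hx

theorem abs_Fsymb_sub_one_le {μ : ℝ} (hμ : 0 ≤ μ) (ξ : ℝ) :
    |Fsymb μ ξ - 1| ≤ μ * ξ ^ 2 / 3 := by
  rw [Fsymb_eq_Fsymb_one_comp_mul hμ]
  simpa [mul_pow, sq_sqrt hμ] using abs_Fsymb_one_sub_one_le (√μ * ξ)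

theorem abs_deriv_Fsymb_le {μ : ℝ} (hμ : 0 ≤ μ) (ξ : ℝ) :
    |deriv (Fsymb μ) ξ| ≤ μ * |ξ| / 2 := by
  rw [Fsymb_eq_Fsymb_one_comp_mul hμ, deriv_comp_mul_left, smul_eq_mul, abs_mul,
    abs_of_nonneg (sqrt_nonneg μ)]
  calc √μ * |deriv (Fsymb 1) (√μ * ξ)| ≤ √μ * (|√μ * ξ| / 2) := by
        gcongr; exact abs_deriv_Fsymb_one_le _
    _ = μ * |ξ| / 2 := by
        rw [abs_mul, abs_of_nonneg (sqrt_nonneg μ), ← mul_div_assoc, ← mul_assoc,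
          mul_self_sqrt hμ]

theorem statement16_general (μmax : ℝ) :
    ∃ C : ℝ, 0 < C ∧
      ∀ μ ∈ Set.Ioc (0:ℝ) μmax, ∀ ξ : ℝ,
        |Fsymb μ ξ - 1| ≤ C * μ * ξ ^ 2 ∧ |deriv (Fsymb μ) ξ| ≤ C * μ * |ξ| := by
  refine ⟨1 / 2, by norm_num, fun μ hμ ξ => ⟨?_, ?_⟩⟩
  · have := abs_Fsymb_sub_one_le hμ.1.le ξ
    nlinarith [mul_nonneg hμ.1.le (sq_nonneg ξ)]
  · have := abs_deriv_Fsymb_le hμ.1.le ξ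
    linarith

theorem statement16 (μmax : ℝ) (hμmax : 0 < μmax) :
    ∃ C : ℝ, 0 < C ∧
      ∀ μ ∈ Set.Ioc (0:ℝ) μmax, ∀ ξ : ℝ,
        |Fsymb μ ξ - 1| ≤ C * μ * ξ ^ 2 ∧ |deriv (Fsymb μ) ξ| ≤ C * μ * |ξ| :=
  statement16_general μmax
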